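/- Let n ≥ 1 and let V be a bicompatible subgroup of S([n]^2). If the graph G_R is connected, then G_R is a complete graph on [n], i.e. every pair of distinct vertices of [n] is joined by an edge of G_R. -/

import Mathlib

/-- The permutation `u ⊗ 1` of `[n]³`, acting as `(x,y,z) ↦ (u(x,y), z)`. -/
def tensorOne {n : ℕ} (u : Equiv.Perm (Fin n × Fin n)) :
    Equiv.Perm (Fin n × Fin n × Fin n) :=
  (Equiv.prodAssoc (Fin n) (Fin n) (Fin n)).permCongr (u.prodCongr (Equiv.refl (Fin n)))

/-- The permutation `1 ⊗ u` of `[n]³`, acting as `(x,y,z) ↦ (x, u(y,z))`. -/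
def oneTensor {n : ℕ} (u : Equiv.Perm (Fin n × Fin n)) :
    Equiv.Perm (Fin n × Fin n × Fin n) :=
  (Equiv.refl (Fin n)).prodCongr u

/-- `u` is compatible with `v` if `(v ⊗ 1)(1 ⊗ u) = (1 ⊗ u)(v ⊗ 1)` in `S([n]³)`. -/
def Compatible {n : ℕ} (u v : Equiv.Perm (Fin n × Fin n)) : Prop :=
  tensorOne v * oneTensor u = oneTensor u * tensorOne v

/-- The graph `G_R` on `[n]` attached to a subgroup `V ≤ S([n]²)`: distinct
`a, b` are adjacent iff some `v ∈ V` maps some point of row `a` to a point of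
row `b`. -/
def GR {n : ℕ} (V : Subgroup (Equiv.Perm (Fin n × Fin n))) : SimpleGraph (Fin n) where
  Adj a b := a ≠ b ∧ ∃ x y : Fin n, ∃ v ∈ V, v (a, x) = (b, y)
  symm := ⟨by
    rintro a b ⟨hab, x, y, v, hv, hvab⟩
    refine ⟨hab.symm, y, x, v⁻¹, V.inv_mem hv, ?_⟩
    rw [← hvab]
    exact Equiv.symm_apply_apply v (a, x)⟩
  loopless := ⟨fun a h => h.1 rfl⟩

/-- The graph `G_C` on `[n]` attached to a subgroup `V ≤ S([n]²)`: distinct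
`a, b` are adjacent iff some `v ∈ V` maps some point of column `a` to a point
of column `b`. -/
def GC {n : ℕ} (V : Subgroup (Equiv.Perm (Fin n × Fin n))) : SimpleGraph (Fin n) where
  Adj a b := a ≠ b ∧ ∃ x y : Fin n, ∃ v ∈ V, v (x, a) = (y, b)
  symm := ⟨by
    rintro a b ⟨hab, x, y, v, hv, hvab⟩
    refine ⟨hab.symm, y, x, v⁻¹, V.inv_mem hv, ?_⟩
    rw [← hvab]
    exact Equiv.symm_apply_apply v (x, a)⟩
  loopless := ⟨fun a h => h.1 rfl⟩

/-!
Comparing first coordinates in `(v ⊗ 1)(1 ⊗ u) = (1 ⊗ u)(v ⊗ 1)` shows that the row of `v (x, y)`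
does not change when `y` is replaced by the row of `u (y, z)`, i.e. it only depends on the
`G_R`-component of `y`. When `G_R` is connected, every `v ∈ V` therefore maps each row into a
single row, so the relation "some `v ∈ V` maps row `a` into row `b`" is transitive; it contains
the adjacency of `G_R`, hence relates any two vertices, and for distinct vertices it is adjacency.
-/

variable {n : ℕ}

theorem Compatible.fst_apply_fst {u v : Equiv.Perm (Fin n × Fin n)} (h : Compatible u v)
    (x y z : Fin n) : (v (x, (u (y, z)).1)).1 = (v (x, y)).1 := by
  simpa [tensorOne, oneTensor] using congrArg (fun e => (e (x, y, z)).1) h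

namespace GR

variable {V : Subgroup (Equiv.Perm (Fin n × Fin n))}

theorem fst_apply_eq_of_reachable {v : Equiv.Perm (Fin n × Fin n)}
    (hv : ∀ u ∈ V, Compatible u v) (x : Fin n) {y y' : Fin n} (h : (GR V).Reachable y y') :
    (v (x, y)).1 = (v (x, y')).1 := by
  obtain ⟨w⟩ := h
  induction w with
  | nil => rfl
  | cons hadj _ ih =>
    obtain ⟨-, z, z', u, hu, huz⟩ := hadj
    rw [← ih, ← (hv u hu).fst_apply_fst x _ z, huz]

variable (V) in
def RowLinked (a b : Fin n) : Prop :=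
  ∃ v ∈ V, ∃ x, (v (a, x)).1 = b

theorem rowLinked_refl (a : Fin n) : RowLinked V a a :=
  ⟨1, V.one_mem, a, rfl⟩

theorem rowLinked_of_adj {a b : Fin n} (h : (GR V).Adj a b) : RowLinked V a b := by
  obtain ⟨-, x, y, v, hv, hvx⟩ := h
  exact ⟨v, hv, x, by rw [hvx]⟩

theorem RowLinked.trans (hrow : ∀ v ∈ V, ∀ x y y', (v (x, y)).1 = (v (x, y')).1)
    {a b c : Fin n} (hab : RowLinked V a b) (hbc : RowLinked V b c) : RowLinked V a c := by
  obtain ⟨v, hv, x, hvx⟩ := hab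
  obtain ⟨w, hw, y, hwy⟩ := hbc
  refine ⟨w * v, V.mul_mem hw hv, x, ?_⟩
  rw [Equiv.Perm.mul_apply, ← hwy, ← hvx]
  exact hrow w hw _ _ _

theorem rowLinked_of_reachable (hrow : ∀ v ∈ V, ∀ x y y', (v (x, y)).1 = (v (x, y')).1)
    {a b : Fin n} (h : (GR V).Reachable a b) : RowLinked V a b := by
  rw [SimpleGraph.reachable_iff_reflTransGen] at h
  induction h with
  | refl => exact rowLinked_refl a
  | tail _ hadj ih => exact ih.trans hrow (rowLinked_of_adj hadj)

theorem RowLinked.adj {a b : Fin n} (h : RowLinked V a b) (hab : a ≠ b) : (GR V).Adj a b := by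
  obtain ⟨v, hv, x, hvx⟩ := h
  exact ⟨hab, x, (v (a, x)).2, v, hv, by rw [← hvx]⟩

end GR

theorem stmt_18_general (n : ℕ)
    (V : Subgroup (Equiv.Perm (Fin n × Fin n)))
    (hV : ∀ u ∈ V, ∀ v ∈ V, Compatible u v)
    (hconn : (GR V).Connected) :
    ∀ a b : Fin n, a ≠ b → (GR V).Adj a b := by
  have hrow : ∀ v ∈ V, ∀ x y y', (v (x, y)).1 = (v (x, y')).1 := fun v hv x y y' =>
    GR.fst_apply_eq_of_reachable (fun u hu => hV u hu v hv) x (hconn y y')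
  exact fun a b hab => (GR.rowLinked_of_reachable hrow (hconn a b)).adj hab

theorem stmt_18 (n : ℕ) (hn : 1 ≤ n)
    (V : Subgroup (Equiv.Perm (Fin n × Fin n)))
    (hV : ∀ u ∈ V, ∀ v ∈ V, Compatible u v)
    (hconn : (GR V).Connected) :
    ∀ a b : Fin n, a ≠ b → (GR V).Adj a b :=
  stmt_18_general n V hV hconn
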